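/- The energy constraints are active at every optimum: Assume in the compressed-distance program that e_x > 0, e_q > 0, e_x ≤ (|P1| + |P3|)·A², and e_q ≤ (|P2| + |P3|)·B². Then every optimal pair (a, b) satisfies ∑_{l∈P1∪P3} a_l² = e_x and ∑_{l∈P2∪P3} b_l² = e_q. -/

import Mathlib

/-- Feasibility for the compressed-distance program. -/
def Feasible {ι : Type*} [DecidableEq ι] (P1 P2 P3 : Finset ι) (A B eX eQ : ℝ)
    (a b : ι → ℝ) : Prop :=
  (∀ l ∈ P1 ∪ P3, 0 ≤ a l ∧ a l ≤ A) ∧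
  (∀ l ∈ P2 ∪ P3, 0 ≤ b l ∧ b l ≤ B) ∧
  (∑ l ∈ P1 ∪ P3, (a l) ^ 2) ≤ eX ∧
  (∑ l ∈ P2 ∪ P3, (b l) ^ 2) ≤ eQ

/-- Objective of the compressed-distance program. -/
def Obj {ι : Type*} (P1 P2 P3 : Finset ι) (bbar abar : ι → ℝ) (a b : ι → ℝ) : ℝ :=
  -∑ l ∈ P1, a l * bbar l - ∑ l ∈ P2, abar l * b l - ∑ l ∈ P3, a l * b l

/-! If the energy of `a` had slack, the capacity bound would leave a coordinate `a l < A` that can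
be raised a little. Its coefficient in the objective is `bbar l ≥ B > 0` or `b l ≥ 0`, so the raised
pair is again optimal, and at an optimum `0 < a l` forces `0 < b l` for `l ∈ P3`: otherwise setting
`b l` to a small `δ` and rescaling `b` back into its budget gains order `δ` and loses order `δ ^ 2`.
Hence the raise strictly improves the objective. The energy of `b` follows by the symmetry
`a ↔ b`. -/

open Finset Function Filter Topology

theorem Finset.sum_apply_update_of_mem {ι α β : Type*} [DecidableEq ι] [AddCommGroup β]
    {s : Finset ι} (g : ι → α → β) (x : ι → α) {i : ι} (hi : i ∈ s) (v : α) :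
    ∑ l ∈ s, g l (update x i v l) = ∑ l ∈ s, g l (x l) + (g i v - g i (x i)) := by
  rw [← add_sum_erase s _ hi, ← add_sum_erase s _ hi, update_self,
    sum_congr rfl fun l hl => by rw [update_of_ne (ne_of_mem_erase hl)]]
  abel

theorem exists_gt_of_eventually_nhds {α : Type*} [TopologicalSpace α] [LinearOrder α]
    [OrderTopology α] [DenselyOrdered α] [NoMaxOrder α] {a : α} {p : α → Prop}
    (h : ∀ᶠ t in 𝓝 a, p t) : ∃ t, a < t ∧ p t :=
  ((eventually_nhdsWithin_of_eventually_nhds (s := Set.Ioi a) h).and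
    self_mem_nhdsWithin).exists.imp fun _ ⟨hp, ht⟩ => ⟨ht, hp⟩

section BoxBall

variable {ι : Type*} {s : Finset ι} {M e : ℝ} {x : ι → ℝ}

def BoxBall (s : Finset ι) (M e : ℝ) : Set (ι → ℝ) :=
  {x | (∀ l ∈ s, 0 ≤ x l ∧ x l ≤ M) ∧ ∑ l ∈ s, x l ^ 2 ≤ e}

theorem exists_lt_of_sum_sq_lt_card_mul (hx : ∀ l ∈ s, x l ≤ M)
    (h : ∑ l ∈ s, x l ^ 2 < s.card * M ^ 2) : ∃ l ∈ s, x l < M := by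
  by_contra! hge
  have : ∑ l ∈ s, x l ^ 2 = s.card * M ^ 2 := by
    rw [sum_congr rfl fun l hl => by rw [le_antisymm (hx l hl) (hge l hl)], sum_const, nsmul_eq_mul]
  exact h.ne this

variable [DecidableEq ι]

theorem exists_update_add_mem_boxBall (hx : x ∈ BoxBall s M e) (he : ∑ l ∈ s, x l ^ 2 < e)
    {i : ι} (hi : i ∈ s) (hxi : x i < M) : ∃ ε, 0 < ε ∧ update x i (x i + ε) ∈ BoxBall s M e := by
  have hsmall : ∀ᶠ ε in 𝓝 (0 : ℝ),
      x i + ε < M ∧ ∑ l ∈ s, x l ^ 2 + ((x i + ε) ^ 2 - x i ^ 2) < e :=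
    (ContinuousAt.eventually_lt (by fun_prop) (by fun_prop) (by simpa using hxi)).and
      (ContinuousAt.eventually_lt (by fun_prop) (by fun_prop) (by simpa using he))
  obtain ⟨ε, hε, hεM, hεe⟩ := exists_gt_of_eventually_nhds hsmall
  refine ⟨ε, hε, fun l hl => ?_, ?_⟩
  · rcases eq_or_ne l i with rfl | hli
    · rw [update_self]; constructor <;> linarith [(hx.1 l hl).1]
    · rw [update_of_ne hli]; exact hx.1 l hl
  · rw [sum_apply_update_of_mem (fun _ t => t ^ 2) x hi]
    exact hεe.le

/-- Shrinking `x` by the factor `1 - δ ^ 2 / e` frees exactly the energy `δ ^ 2` needed to set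
the zero coordinate `x i` to `δ`; the loss is of order `δ ^ 2` and the gain of order `δ`. -/
theorem exists_sum_mul_lt_of_eq_zero (hx : x ∈ BoxBall s M e) (hM : 0 < M) (he : 0 < e)
    {i : ι} (hi : i ∈ s) (hxi : x i = 0) {w : ι → ℝ} (hw : 0 < w i) :
    ∃ x' ∈ BoxBall s M e, ∑ l ∈ s, x l * w l < ∑ l ∈ s, x' l * w l := by
  set S := ∑ l ∈ s, x l * w l
  have hsmall : ∀ᶠ δ in 𝓝 (0 : ℝ), δ < M ∧ δ ^ 2 < e ∧ δ * S < w i * e :=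
    (ContinuousAt.eventually_lt (by fun_prop) (by fun_prop) (by simpa using hM)).and <|
      (ContinuousAt.eventually_lt (by fun_prop) (by fun_prop) (by simpa using he)).and
      (ContinuousAt.eventually_lt (by fun_prop) (by fun_prop) (by simpa using mul_pos hw he))
  obtain ⟨δ, hδ, hδM, hδe, hδS⟩ := exists_gt_of_eventually_nhds hsmall
  set c := 1 - δ ^ 2 / e
  have hc0 : 0 ≤ c := by rw [sub_nonneg, div_le_one he]; exact hδe.le
  have hc1 : c ≤ 1 := sub_le_self _ (by positivity)
  refine ⟨update (fun l => c * x l) i δ, ⟨fun l hl => ?_, ?_⟩, ?_⟩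
  · rcases eq_or_ne l i with rfl | hli
    · rw [update_self]; exact ⟨hδ.le, hδM.le⟩
    · rw [update_of_ne hli]
      obtain ⟨h0, hle⟩ := hx.1 l hl
      exact ⟨mul_nonneg hc0 h0, by nlinarith⟩
  · rw [sum_apply_update_of_mem (fun _ t => t ^ 2) _ hi]
    simp only [hxi, mul_zero, mul_pow, ← mul_sum]
    have hshrink : c ^ 2 * ∑ l ∈ s, x l ^ 2 ≤ c * e := by
      calc c ^ 2 * ∑ l ∈ s, x l ^ 2 ≤ c ^ 2 * e := by gcongr; exact hx.2
        _ ≤ c * e := by gcongr; nlinarith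
    have hce : c * e = e - δ ^ 2 := by simp only [c]; field_simp
    linarith
  · rw [sum_apply_update_of_mem (fun l t => t * w l) _ hi]
    simp only [hxi, mul_zero, zero_mul, mul_assoc, ← mul_sum]
    have hgain : S < c * S + δ * w i := by
      have hloss : δ ^ 2 / e * S < δ * w i := by
        rw [div_mul_eq_mul_div, div_lt_iff₀ he]; nlinarith
      simp only [c]; linarith
    linarith

end BoxBall

section Program

variable {ι : Type*} [DecidableEq ι] {P1 P2 P3 : Finset ι} {A B eX eQ : ℝ} {bbar abar a b : ι → ℝ}

theorem feasible_iff : Feasible P1 P2 P3 A B eX eQ a b ↔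
    a ∈ BoxBall (P1 ∪ P3) A eX ∧ b ∈ BoxBall (P2 ∪ P3) B eQ :=
  ⟨fun ⟨ha, hb, hea, heb⟩ => ⟨⟨ha, hea⟩, hb, heb⟩, fun ⟨⟨ha, hea⟩, hb, heb⟩ => ⟨ha, hb, hea, heb⟩⟩

theorem feasible_swap : Feasible P2 P1 P3 B A eQ eX b a ↔ Feasible P1 P2 P3 A B eX eQ a b := by
  simp only [feasible_iff, and_comm]

omit [DecidableEq ι] in
theorem obj_swap : Obj P2 P1 P3 abar bbar b a = Obj P1 P2 P3 bbar abar a b := by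
  simp only [Obj, mul_comm]
  ring

theorem obj_eq_sum_union_piecewise (h13 : Disjoint P1 P3) : Obj P1 P2 P3 bbar abar a b =
    -∑ l ∈ P1 ∪ P3, a l * P1.piecewise bbar b l - ∑ l ∈ P2, abar l * b l := by
  have h1 : ∑ l ∈ P1, a l * P1.piecewise bbar b l = ∑ l ∈ P1, a l * bbar l :=
    sum_congr rfl fun l hl => by rw [piecewise_eq_of_mem _ _ _ hl]
  have h3 : ∑ l ∈ P3, a l * P1.piecewise bbar b l = ∑ l ∈ P3, a l * b l :=
    sum_congr rfl fun l hl => by rw [piecewise_eq_of_notMem _ _ _ (disjoint_right.1 h13 hl)]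
  rw [Obj, sum_union h13, h1, h3]
  ring

variable (P1 P2 P3 A B eX eQ bbar abar) in
def IsOptimal (a b : ι → ℝ) : Prop :=
  Feasible P1 P2 P3 A B eX eQ a b ∧
    ∀ a' b', Feasible P1 P2 P3 A B eX eQ a' b' →
      Obj P1 P2 P3 bbar abar a b ≤ Obj P1 P2 P3 bbar abar a' b'

theorem IsOptimal.swap (h : IsOptimal P1 P2 P3 A B eX eQ bbar abar a b) :
    IsOptimal P2 P1 P3 B A eQ eX abar bbar b a := by
  refine ⟨feasible_swap.2 h.1, fun b' a' h' => ?_⟩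
  exact obj_swap.trans_le ((h.2 a' b' (feasible_swap.1 h')).trans_eq obj_swap.symm)

theorem IsOptimal.of_obj_le {a' b' : ι → ℝ} (h : IsOptimal P1 P2 P3 A B eX eQ bbar abar a b)
    (h' : Feasible P1 P2 P3 A B eX eQ a' b')
    (hle : Obj P1 P2 P3 bbar abar a' b' ≤ Obj P1 P2 P3 bbar abar a b) :
    IsOptimal P1 P2 P3 A B eX eQ bbar abar a' b' :=
  ⟨h', fun a'' b'' h'' => hle.trans (h.2 a'' b'' h'')⟩

theorem IsOptimal.b_pos_of_a_pos (h : IsOptimal P1 P2 P3 A B eX eQ bbar abar a b)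
    (h23 : Disjoint P2 P3) (hB : 0 < B) (heQ : 0 < eQ) {l : ι} (hl : l ∈ P3) (hal : 0 < a l) :
    0 < b l := by
  obtain ⟨ha, hb⟩ := feasible_iff.1 h.1
  have hl' : l ∈ P2 ∪ P3 := mem_union_right _ hl
  refine (hb.1 l hl').1.lt_of_ne' fun hbl => ?_
  have hw : 0 < P2.piecewise abar a l := by
    rwa [piecewise_eq_of_notMem _ _ _ (disjoint_right.1 h23 hl)]
  obtain ⟨b', hb', hlt⟩ := exists_sum_mul_lt_of_eq_zero hb hB heQ hl' hbl hw
  have := h.2 a b' (feasible_iff.2 ⟨ha, hb'⟩)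
  rw [← obj_swap, ← obj_swap (a := a), obj_eq_sum_union_piecewise h23,
    obj_eq_sum_union_piecewise h23] at this
  linarith

theorem IsOptimal.sum_sq_eq (h : IsOptimal P1 P2 P3 A B eX eQ bbar abar a b)
    (h13 : Disjoint P1 P3) (h23 : Disjoint P2 P3) (hB : 0 < B) (heQ : 0 < eQ)
    (hXcap : eX ≤ ((P1.card : ℝ) + (P3.card : ℝ)) * A ^ 2) (hbbar : ∀ l ∈ P1, B ≤ bbar l) :
    ∑ l ∈ P1 ∪ P3, a l ^ 2 = eX := by
  obtain ⟨ha, hb⟩ := feasible_iff.1 h.1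
  refine ha.2.antisymm (not_lt.1 fun hslack => ?_)
  obtain ⟨l, hl, hlA⟩ := exists_lt_of_sum_sq_lt_card_mul (fun l hl => (ha.1 l hl).2)
    (by rw [card_union_of_disjoint h13]; push_cast; linarith)
  obtain ⟨ε, hε, ha'⟩ := exists_update_add_mem_boxBall ha hslack hl hlA
  set a' := update a l (a l + ε)
  have hfeas' : Feasible P1 P2 P3 A B eX eQ a' b := feasible_iff.2 ⟨ha', hb⟩
  have hobj : Obj P1 P2 P3 bbar abar a' b =
      Obj P1 P2 P3 bbar abar a b - ε * P1.piecewise bbar b l := by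
    rw [obj_eq_sum_union_piecewise h13, obj_eq_sum_union_piecewise h13,
      sum_apply_update_of_mem (fun l t => t * P1.piecewise bbar b l) a hl]
    ring
  rcases mem_union.1 hl with hl1 | hl3
  · have hcoef : 0 < bbar l := hB.trans_le (hbbar l hl1)
    rw [piecewise_eq_of_mem _ _ _ hl1] at hobj
    linarith [h.2 a' b hfeas', mul_pos hε hcoef]
  · rw [piecewise_eq_of_notMem _ _ _ (disjoint_right.1 h13 hl3)] at hobj
    have hopt' : IsOptimal P1 P2 P3 A B eX eQ bbar abar a' b :=
      h.of_obj_le hfeas' (by rw [hobj]; nlinarith [(hb.1 l (mem_union_right _ hl3)).1])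
    have hbl : 0 < b l :=
      hopt'.b_pos_of_a_pos h23 hB heQ hl3 (by simp only [a', update_self]; linarith [(ha.1 l hl).1])
    linarith [h.2 a' b hfeas', mul_pos hε hbl]

end Program

theorem energy_constraints_active_at_optimum_general {ι : Type*} [DecidableEq ι]
    (P1 P2 P3 : Finset ι)
    (h13 : Disjoint P1 P3) (h23 : Disjoint P2 P3)
    (A B eX eQ : ℝ) (hA : 0 < A) (hB : 0 < B) (heX : 0 < eX) (heQ : 0 < eQ)
    (hXcap : eX ≤ ((P1.card : ℝ) + (P3.card : ℝ)) * A ^ 2)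
    (hQcap : eQ ≤ ((P2.card : ℝ) + (P3.card : ℝ)) * B ^ 2)
    (bbar abar : ι → ℝ)
    (hbbar : ∀ l ∈ P1, B ≤ bbar l) (habar : ∀ l ∈ P2, A ≤ abar l)
    (a b : ι → ℝ)
    (hfeas : Feasible P1 P2 P3 A B eX eQ a b)
    (hopt : ∀ a' b' : ι → ℝ, Feasible P1 P2 P3 A B eX eQ a' b' →
      Obj P1 P2 P3 bbar abar a b ≤ Obj P1 P2 P3 bbar abar a' b') :
    (∑ l ∈ P1 ∪ P3, (a l) ^ 2) = eX ∧ (∑ l ∈ P2 ∪ P3, (b l) ^ 2) = eQ := by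
  have h : IsOptimal P1 P2 P3 A B eX eQ bbar abar a b := ⟨hfeas, hopt⟩
  exact ⟨h.sum_sq_eq h13 h23 hB heQ hXcap hbbar, h.swap.sum_sq_eq h23 h13 hA heX hQcap habar⟩

/-- The energy constraints are active at every optimum: if `0 < eX ≤ (|P1|+|P3|)·A²`
and `0 < eQ ≤ (|P2|+|P3|)·B²`, then every optimal pair saturates both energy
budgets. -/
theorem energy_constraints_active_at_optimum {ι : Type*} [DecidableEq ι]
    (P1 P2 P3 : Finset ι)
    (h12 : Disjoint P1 P2) (h13 : Disjoint P1 P3) (h23 : Disjoint P2 P3)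
    (A B eX eQ : ℝ) (hA : 0 < A) (hB : 0 < B) (heX : 0 < eX) (heQ : 0 < eQ)
    (hXcap : eX ≤ ((P1.card : ℝ) + (P3.card : ℝ)) * A ^ 2)
    (hQcap : eQ ≤ ((P2.card : ℝ) + (P3.card : ℝ)) * B ^ 2)
    (bbar abar : ι → ℝ)
    (hbbar : ∀ l ∈ P1, B ≤ bbar l) (habar : ∀ l ∈ P2, A ≤ abar l)
    (a b : ι → ℝ)
    (hfeas : Feasible P1 P2 P3 A B eX eQ a b)
    (hopt : ∀ a' b' : ι → ℝ, Feasible P1 P2 P3 A B eX eQ a' b' →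
      Obj P1 P2 P3 bbar abar a b ≤ Obj P1 P2 P3 bbar abar a' b') :
    (∑ l ∈ P1 ∪ P3, (a l) ^ 2) = eX ∧ (∑ l ∈ P2 ∪ P3, (b l) ^ 2) = eQ :=
  energy_constraints_active_at_optimum_general P1 P2 P3 h13 h23 A B eX eQ hA hB heX heQ hXcap hQcap
    bbar abar hbbar habar a b hfeas hopt
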